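/- Let N, M ≥ 1, let K_s be a symmetric 2N×2N integer matrix with det K_s ≠ 0 and K_d a symmetric 2M×2M integer matrix with det K_d ≠ 0, and set K_b = diag(−K_s, K_d). Let {Λ_{a,1}, …, Λ_{a,N}} ⊂ ℤ^{2N} be linearly independent over ℚ with Λ_{a,i}ᵀ K_s Λ_{a,j} = 0 for all i, j, and let {Λ_{b,1}, …, Λ_{b,N+M}} ⊂ ℤ^{2N+2M} be linearly independent over ℚ with Λ_{b,i}ᵀ K_b Λ_{b,j} = 0 for all i, j. Define the (4N+2M)×(4N+2M) integer matrix K′ = [[0, I, 0], [I, −K_s, 0], [0, 0, K_d]] (blocks of sizes 2N, 2N, 2M) and the 2N+M vectors Λ′_i = (K_s Λ_{a,i}, Λ_{a,i}, 0) for 1 ≤ i ≤ N and Λ′_{N+j} = (0_{2N}, Λ_{b,j}) for 1 ≤ j ≤ N+M. Then K′ is symmetric with det K′ ≠ 0, the Λ′_i are linearly independent over ℚ, Λ′_iᵀ K′ Λ′_j = 0 for all i, j, and the index in Γ′ = {p ∈ ℤ^{4N+2M} : Λ′_iᵀ K′ p = 0 for all i} of the subgroup A′ generated by the Λ′_i is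 finite and equals the greatest common divisor of the absolute values of the (2N+M)×(2N+M) minors of the (4N+2M)×(2N+M) matrix M′ whose columns are the Λ′_i. -/

import Mathlib

/-!
The lattice `Γ'` is saturated in `ℤⁿ`, and over `ℚ` the vectors `Λ'ᵢ` span a Lagrangian subspace
of the nondegenerate form `K'` (isotropic, of half the dimension), so `Γ' ⊗ ℚ` is their span and
`Γ'` has rank `2N + M`. A basis of `Γ'` factors `M' = B C` with `C` square, and
`[Γ' : A'] = |det C|`. Being saturated, `Γ'` is a direct summand of `ℤⁿ`, so `B` has an integral
left inverse and, by the Cauchy–Binet expansion, coprime maximal minors. The maximal minors of `M'`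
are those of `B` times `det C`, so their gcd is `|det C|`.
-/

open Matrix

/-- The lattice `Γ` of low-energy sectors: integer vectors `p` with `Λᵢᵀ K p = 0` for all
gapping vectors `Λᵢ`. -/
def sectorLattice {n κ : Type*} [Fintype n] (K : Matrix n n ℤ) (Λ : κ → n → ℤ) :
    AddSubgroup (n → ℤ) where
  carrier := {p | ∀ i, Λ i ⬝ᵥ (K *ᵥ p) = 0}
  zero_mem' := by
    intro i
    simp [Matrix.mulVec_zero]
  add_mem' := by
    intro a b ha hb i
    rw [Matrix.mulVec_add, dotProduct_add, ha i, hb i, add_zero]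
  neg_mem' := by
    intro a ha i
    rw [Matrix.mulVec_neg, dotProduct_neg, ha i, neg_zero]

/-- The greatest common divisor of the absolute values of the maximal minors of an integer
matrix `M`. -/
noncomputable def minorGcd {R C : Type*} [Fintype R] [Fintype C] [DecidableEq R]
    [DecidableEq C] (M : Matrix R C ℤ) : ℕ :=
  Finset.univ.gcd fun f : C ↪ R => ((M.submatrix f id).det).natAbs

section MaximalMinors

variable {k n : Type*} [Fintype k] [DecidableEq k] [Fintype n]

theorem Matrix.det_mul_eq_sum_prod_mul_det_submatrix {R : Type*} [CommRing R]
    (A : Matrix k n R) (B : Matrix n k R) :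
    (A * B).det = ∑ g : k → n, (∏ i, A i (g i)) * (B.submatrix g id).det := by
  have hrows : A * B = Matrix.of fun i => ∑ j, A i j • B j := by
    ext i l
    simp [Matrix.mul_apply, Finset.sum_apply]
  have hdet : (A * B).det = (detRowAlternating : (k → R) [⋀^k]→ₗ[R] R).toMultilinearMap
      fun i => ∑ j, A i j • B j := by
    rw [hrows]
    rfl
  rw [hdet, MultilinearMap.map_sum]
  refine Finset.sum_congr rfl fun g _ => ?_
  rw [MultilinearMap.map_smul_univ, smul_eq_mul]
  rfl

variable [DecidableEq n]

theorem minorGcd_dvd_det_submatrix (B : Matrix n k ℤ) (f : k ↪ n) :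
    (minorGcd B : ℤ) ∣ (B.submatrix f id).det :=
  Int.dvd_natAbs.mp (Int.natCast_dvd_natCast.mpr (Finset.gcd_dvd (Finset.mem_univ f)))

theorem minorGcd_dvd_det_mul (A : Matrix k n ℤ) (B : Matrix n k ℤ) :
    (minorGcd B : ℤ) ∣ (A * B).det := by
  rw [Matrix.det_mul_eq_sum_prod_mul_det_submatrix]
  refine Finset.dvd_sum fun g _ => Dvd.dvd.mul_left ?_ _
  by_cases hg : Function.Injective g
  · exact minorGcd_dvd_det_submatrix B ⟨g, hg⟩
  · obtain ⟨i, j, hij, hne⟩ := Function.not_injective_iff.mp hg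
    rw [Matrix.det_zero_of_row_eq hne (by ext; simp [hij])]
    exact dvd_zero _

theorem minorGcd_eq_one_of_mul_eq_one {P : Matrix k n ℤ} {B : Matrix n k ℤ} (h : P * B = 1) :
    minorGcd B = 1 := by
  have hdvd := minorGcd_dvd_det_mul P B
  rw [h, Matrix.det_one] at hdvd
  exact Nat.dvd_one.mp (Int.natCast_dvd_natCast.mp hdvd)

theorem minorGcd_mul (B : Matrix n k ℤ) (C : Matrix k k ℤ) :
    minorGcd (B * C) = minorGcd B * C.det.natAbs := by
  have hminor (f : k ↪ n) : ((B * C).submatrix f id).det.natAbs =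
      (B.submatrix f id).det.natAbs * C.det.natAbs := by
    rw [Matrix.submatrix_mul B C f id id Function.bijective_id, Matrix.submatrix_id_id,
      Matrix.det_mul, Int.natAbs_mul]
  simp only [minorGcd, hminor, Finset.gcd_mul_right, normalize_eq]

end MaximalMinors

theorem linearIndependent_int_iff_rat {ι n : Type*} {V : ι → n → ℤ} :
    LinearIndependent ℤ V ↔ LinearIndependent ℚ fun i j => (V i j : ℚ) := by
  rw [← LinearIndependent.iff_fractionRing ℤ ℚ,
    ← LinearMap.linearIndependent_iff ((Algebra.linearMap ℤ ℚ).compLeft n)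
      (LinearMap.ker_eq_bot.mpr (Int.cast_injective.comp_left))]
  rfl

theorem Submodule.isTorsionFree_quotient_of_smul_mem {R M : Type*} [CommRing R] [IsDomain R]
    [AddCommGroup M] [Module R M] {p : Submodule R M}
    (hsat : ∀ (c : R) (x : M), c ≠ 0 → c • x ∈ p → x ∈ p) :
    Module.IsTorsionFree R (M ⧸ p) := by
  refine .of_smul_eq_zero fun c y hcy => ?_
  obtain ⟨x, rfl⟩ := p.mkQ_surjective y
  rw [or_iff_not_imp_left]
  intro hc
  rw [← LinearMap.map_smul, Submodule.mkQ_apply, Submodule.Quotient.mk_eq_zero] at hcy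
  rw [Submodule.mkQ_apply, Submodule.Quotient.mk_eq_zero]
  exact hsat c x hc hcy

theorem Submodule.exists_retraction_of_projective_quotient {R M : Type*} [Ring R]
    [AddCommGroup M] [Module R M] (p : Submodule R M) [Module.Projective R (M ⧸ p)] :
    ∃ r : M →ₗ[R] p, r ∘ₗ p.subtype = LinearMap.id := by
  obtain ⟨s, hs⟩ := Module.projective_lifting_property p.mkQ LinearMap.id p.mkQ_surjective
  have hmem (x : M) : x - s (p.mkQ x) ∈ p := by
    rw [← Submodule.Quotient.mk_eq_zero, Submodule.Quotient.mk_sub, ← Submodule.mkQ_apply,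
      ← Submodule.mkQ_apply, ← LinearMap.comp_apply, hs, LinearMap.id_apply, sub_self]
  refine ⟨(LinearMap.id - s ∘ₗ p.mkQ).codRestrict p hmem, ?_⟩
  ext x
  simp [(Submodule.Quotient.mk_eq_zero p).mpr x.2]

theorem Module.Basis.det_toMatrix_ne_zero {R M ι : Type*} [CommRing R] [IsDomain R]
    [AddCommGroup M] [Module R M] [Fintype ι] [DecidableEq ι] (b : Module.Basis ι R M)
    {v : ι → M} (hv : LinearIndependent R v) : (b.toMatrix v).det ≠ 0 := by
  intro h0
  obtain ⟨g, hg0, hg⟩ := Matrix.exists_mulVec_eq_zero_iff.mpr h0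
  refine hg0 (funext (Fintype.linearIndependent_iff.mp hv g (b.repr.injective ?_)))
  ext i
  simpa [Module.Basis.toMatrix_apply, Matrix.mulVec, dotProduct, mul_comm] using congrFun hg i

theorem relIndex_closure_eq_natAbs_det_toMatrix {ι E : Type*} [Fintype ι] [DecidableEq ι]
    [AddCommGroup E] {Γ : AddSubgroup E} {V : ι → E}
    (hV : LinearIndependent ℤ V) (hVΓ : ∀ i, V i ∈ Γ) (b : Module.Basis ι ℤ Γ.toIntSubmodule) :
    (AddSubgroup.closure (Set.range V)).relIndex Γ =
      (b.toMatrix fun i => (⟨V i, hVΓ i⟩ : Γ.toIntSubmodule)).det.natAbs := by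
  let bA : Module.Basis ι ℤ (AddSubgroup.closure (Set.range V)).toIntSubmodule :=
    (Module.Basis.span hV).map (LinearEquiv.ofEq _ _ (by
      rw [← Submodule.span_int_eq_addSubgroupClosure, Submodule.toAddSubgroup_toIntSubmodule]))
  rw [AddSubgroup.relIndex_eq_natAbs_det _ _
    ((AddSubgroup.closure_le _).mpr (Set.range_subset_iff.mpr hVΓ)) bA b, Module.Basis.det_apply]
  congr
  ext i
  simp [bA, Module.Basis.span_apply]

section Lattice

variable {ι n : Type*} [Fintype ι] [Fintype n]

theorem finrank_eq_card_of_mem_span_rat {Γ : Submodule ℤ (n → ℤ)} {V : ι → n → ℤ}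
    (hVΓ : ∀ i, V i ∈ Γ) (hind : LinearIndependent ℚ fun i j => (V i j : ℚ))
    (hspan : ∀ p ∈ Γ, (fun j => (p j : ℚ)) ∈ Submodule.span ℚ (Set.range fun i j => (V i j : ℚ))) :
    Module.finrank ℤ Γ = Fintype.card ι := by
  apply le_antisymm
  · let b := Module.Free.chooseBasis ℤ Γ
    have hb : LinearIndependent ℚ fun x j => ((b x : n → ℤ) j : ℚ) :=
      linearIndependent_int_iff_rat.mp (b.linearIndependent.map' Γ.subtype Γ.ker_subtype)
    have hle := linearIndependent_le_span' _ hb _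
      (Set.range_subset_iff.mpr fun x => hspan _ (b x).2)
    rw [Cardinal.mk_fintype, Nat.cast_le] at hle
    rw [Module.finrank_eq_card_chooseBasisIndex]
    exact hle.trans (Fintype.card_range_le _)
  · calc Fintype.card ι = Module.finrank ℤ (Submodule.span ℤ (Set.range V)) :=
          (finrank_span_eq_card (linearIndependent_int_iff_rat.mpr hind)).symm
      _ ≤ Module.finrank ℤ Γ :=
          Submodule.finrank_mono (Submodule.span_le.mpr (Set.range_subset_iff.mpr hVΓ))

variable [DecidableEq ι]

theorem toMatrix_subtype_mul_basis_toMatrix {Γ : Submodule ℤ (n → ℤ)} (b : Module.Basis ι ℤ Γ)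
    (v : ι → Γ) :
    LinearMap.toMatrix b (Pi.basisFun ℤ n) Γ.subtype * b.toMatrix v =
      Matrix.of fun r c => (v c : n → ℤ) r := by
  ext r c
  simp only [Matrix.mul_apply, LinearMap.toMatrix_apply, Module.Basis.toMatrix_apply,
    Pi.basisFun_repr, Submodule.subtype_apply, Matrix.of_apply]
  have h := congrArg (fun y : Γ => (y : n → ℤ) r) (b.sum_repr (v c))
  simp only [Submodule.coe_sum, Finset.sum_apply, Submodule.coe_smul, Pi.smul_apply,
    smul_eq_mul] at h
  simp_rw [← h, mul_comm]

variable [DecidableEq n]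

theorem minorGcd_toMatrix_subtype_eq_one {Γ : Submodule ℤ (n → ℤ)} (b : Module.Basis ι ℤ Γ)
    {r : (n → ℤ) →ₗ[ℤ] Γ} (hr : r ∘ₗ Γ.subtype = LinearMap.id) :
    minorGcd (LinearMap.toMatrix b (Pi.basisFun ℤ n) Γ.subtype) = 1 :=
  minorGcd_eq_one_of_mul_eq_one (P := LinearMap.toMatrix (Pi.basisFun ℤ n) b r) <| by
    rw [← LinearMap.toMatrix_comp, hr, LinearMap.toMatrix_id]

theorem relIndex_closure_eq_minorGcd {Γ : AddSubgroup (n → ℤ)} {V : ι → n → ℤ}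
    (hVΓ : ∀ i, V i ∈ Γ) (hsat : ∀ (c : ℤ) (p : n → ℤ), c ≠ 0 → c • p ∈ Γ → p ∈ Γ)
    (hind : LinearIndependent ℚ fun i j => (V i j : ℚ))
    (hspan : ∀ p ∈ Γ, (fun j => (p j : ℚ)) ∈ Submodule.span ℚ (Set.range fun i j => (V i j : ℚ))) :
    (AddSubgroup.closure (Set.range V)).relIndex Γ ≠ 0 ∧
      (AddSubgroup.closure (Set.range V)).relIndex Γ = minorGcd (Matrix.of fun r c => V c r) := by
  have hindZ : LinearIndependent ℤ V := linearIndependent_int_iff_rat.mpr hind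
  let bΓ : Module.Basis ι ℤ Γ.toIntSubmodule :=
    (Module.finBasisOfFinrankEq ℤ _ (finrank_eq_card_of_mem_span_rat hVΓ hind hspan)).reindex
      (Fintype.equivFin ι).symm
  let C := bΓ.toMatrix fun i => (⟨V i, hVΓ i⟩ : Γ.toIntSubmodule)
  have hC : C.det ≠ 0 := bΓ.det_toMatrix_ne_zero (.of_comp Γ.toIntSubmodule.subtype hindZ)
  have hfactor : LinearMap.toMatrix bΓ (Pi.basisFun ℤ n) Γ.toIntSubmodule.subtype * C =
      Matrix.of fun r c => V c r :=
    toMatrix_subtype_mul_basis_toMatrix bΓ _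
  -- `ℤⁿ ⧸ Γ` is torsion-free, hence free, so `Γ` is a direct summand of `ℤⁿ`.
  have : Module.IsTorsionFree ℤ ((n → ℤ) ⧸ Γ.toIntSubmodule) :=
    Submodule.isTorsionFree_quotient_of_smul_mem hsat
  obtain ⟨r, hr⟩ := Γ.toIntSubmodule.exists_retraction_of_projective_quotient
  rw [relIndex_closure_eq_natAbs_det_toMatrix hindZ hVΓ bΓ, ← hfactor, minorGcd_mul,
    minorGcd_toMatrix_subtype_eq_one bΓ hr, one_mul]
  exact ⟨Int.natAbs_ne_zero.mpr hC, rfl⟩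

end Lattice

theorem Matrix.mem_span_of_forall_dotProduct_mulVec_eq_zero {ι n F : Type*} [Fintype ι]
    [Fintype n] [DecidableEq n] [Field F] {K : Matrix n n F} (hK : K.det ≠ 0) {V : ι → n → F}
    (hV : LinearIndependent F V) (hiso : ∀ i j, V i ⬝ᵥ (K *ᵥ V j) = 0)
    (hcard : Fintype.card n ≤ 2 * Fintype.card ι)
    {p : n → F} (hp : ∀ i, V i ⬝ᵥ (K *ᵥ p) = 0) : p ∈ Submodule.span F (Set.range V) := by
  let G := Matrix.of V * K
  have hG (x : n → F) : G *ᵥ x = 0 ↔ ∀ i, V i ⬝ᵥ (K *ᵥ x) = 0 := by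
    rw [← Matrix.mulVec_mulVec]
    exact funext_iff
  have hle : Submodule.span F (Set.range V) ≤ LinearMap.ker G.mulVecLin :=
    Submodule.span_le.mpr <| Set.range_subset_iff.mpr fun j => by simp [hG, hiso]
  have hrank : G.rank = Fintype.card ι := by
    rw [Matrix.rank_mul_eq_left_of_isUnit_det _ _ (isUnit_iff_ne_zero.mpr hK),
      Matrix.rank_eq_finrank_span_row]
    exact finrank_span_eq_card hV
  have hker : Module.finrank F (LinearMap.ker G.mulVecLin) ≤
      Module.finrank F (Submodule.span F (Set.range V)) := by
    have := LinearMap.finrank_range_add_finrank_ker G.mulVecLin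
    rw [Module.finrank_fintype_fun_eq_card, ← Matrix.rank, hrank] at this
    rw [finrank_span_eq_card hV]
    omega
  rw [Submodule.eq_of_le_of_finrank_le hle hker]
  simp [hG, hp]

theorem smul_mem_sectorLattice_iff {n κ : Type*} [Fintype n] {K : Matrix n n ℤ}
    {Λ : κ → n → ℤ} {c : ℤ} (hc : c ≠ 0) {p : n → ℤ} :
    c • p ∈ sectorLattice K Λ ↔ p ∈ sectorLattice K Λ :=
  forall_congr' fun i => by
    rw [Matrix.mulVec_smul, dotProduct_smul, smul_eq_mul, mul_eq_zero, or_iff_right hc]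

theorem Int.cast_dotProduct_mulVec {n : Type*} [Fintype n] (K : Matrix n n ℤ) (v w : n → ℤ) :
    ((v ⬝ᵥ (K *ᵥ w) : ℤ) : ℚ) = (fun j => (v j : ℚ)) ⬝ᵥ (K.map (↑) *ᵥ fun j => (w j : ℚ)) := by
  simp [dotProduct, Matrix.mulVec]

theorem relIndex_sectorLattice_eq_minorGcd {ι n : Type*} [Fintype ι] [DecidableEq ι]
    [Fintype n] [DecidableEq n] {K : Matrix n n ℤ} (hK : K.det ≠ 0) {V : ι → n → ℤ}
    (hind : LinearIndependent ℚ fun i j => (V i j : ℚ)) (hiso : ∀ i j, V i ⬝ᵥ (K *ᵥ V j) = 0)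
    (hcard : Fintype.card n ≤ 2 * Fintype.card ι) :
    (AddSubgroup.closure (Set.range V)).relIndex (sectorLattice K V) ≠ 0 ∧
      (AddSubgroup.closure (Set.range V)).relIndex (sectorLattice K V) =
        minorGcd (Matrix.of fun r c => V c r) := by
  refine relIndex_closure_eq_minorGcd (fun j i => hiso i j)
    (fun c p hc => (smul_mem_sectorLattice_iff hc).mp) hind fun p hp => ?_
  refine Matrix.mem_span_of_forall_dotProduct_mulVec_eq_zero (K := K.map (↑)) ?_ hind
    (fun i j => ?_) hcard fun i => ?_
  · rwa [← Int.cast_det, Int.cast_ne_zero]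
  · rw [← Int.cast_dotProduct_mulVec, hiso, Int.cast_zero]
  · rw [← Int.cast_dotProduct_mulVec, hp i, Int.cast_zero]

section Annulus

variable {a b c d : Type*} [DecidableEq a]

def annulusK (Ks : Matrix a a ℤ) (Kd : Matrix b b ℤ) : Matrix (a ⊕ (a ⊕ b)) (a ⊕ (a ⊕ b)) ℤ :=
  fromBlocks 0 (fromCols 1 0) (fromRows 1 0) (fromBlocks (-Ks) 0 0 Kd)

variable {Ks : Matrix a a ℤ} {Kd : Matrix b b ℤ}

theorem isSymm_annulusK (hKs : Ks.IsSymm) (hKd : Kd.IsSymm) : (annulusK Ks Kd).IsSymm := by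
  rw [Matrix.IsSymm, annulusK, fromBlocks_transpose, transpose_fromRows, transpose_fromCols,
    fromBlocks_transpose]
  simp [hKs.eq, hKd.eq]

variable [Fintype a]

def annulusNullVectors (Ks : Matrix a a ℤ) (Λa : c → a → ℤ) (Λb : d → a ⊕ b → ℤ) :
    c ⊕ d → a ⊕ (a ⊕ b) → ℤ :=
  Sum.elim (fun i => Sum.elim (Ks *ᵥ Λa i) (Sum.elim (Λa i) 0)) fun j => Sum.elim 0 (Λb j)

theorem linearIndependent_annulusNullVectors [Fintype c] [Fintype d] (hKs : Ks.det ≠ 0)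
    {Λa : c → a → ℤ} {Λb : d → a ⊕ b → ℤ} (ha : LinearIndependent ℤ Λa)
    (hb : LinearIndependent ℤ Λb) : LinearIndependent ℤ (annulusNullVectors Ks Λa Λb) := by
  rw [Fintype.linearIndependent_iff] at ha hb ⊢
  intro g hg
  have hfirst : Ks *ᵥ ∑ i, g (Sum.inl i) • Λa i = 0 := by
    simp only [Matrix.mulVec_sum, Matrix.mulVec_smul]
    ext r
    simpa [annulusNullVectors, Fintype.sum_sum_type, Finset.sum_apply]
      using congrFun hg (Sum.inl r)
  have hga : ∀ i, g (Sum.inl i) = 0 := ha _ <| by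
    by_contra h
    exact hKs (Matrix.exists_mulVec_eq_zero_iff.mp ⟨_, h, hfirst⟩)
  have hgb : ∀ j, g (Sum.inr j) = 0 := hb _ <| by
    ext s
    simpa [annulusNullVectors, Fintype.sum_sum_type, hga, Finset.sum_apply]
      using congrFun hg (Sum.inr s)
  rintro (i | j)
  exacts [hga i, hgb j]

variable [Fintype b]

theorem annulusK_mulVec (x y : a → ℤ) (z : b → ℤ) :
    annulusK Ks Kd *ᵥ Sum.elim x (Sum.elim y z) =
      Sum.elim y (Sum.elim (x - Ks *ᵥ y) (Kd *ᵥ z)) := by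
  rw [annulusK, fromBlocks_mulVec, Sum.elim_comp_inl, Sum.elim_comp_inr, fromCols_mulVec_sumElim,
    fromRows_mulVec, fromBlocks_mulVec, Sum.elim_comp_inl, Sum.elim_comp_inr]
  ext (r | r | r) <;> simp [Matrix.neg_mulVec, sub_eq_add_neg]

theorem annulusK_mulVec_outer (x : a → ℤ) :
    annulusK Ks Kd *ᵥ Sum.elim (Ks *ᵥ x) (Sum.elim x 0) = Sum.elim x 0 := by
  simp [annulusK_mulVec]

theorem annulusK_mulVec_inner (y : a → ℤ) (z : b → ℤ) :
    annulusK Ks Kd *ᵥ Sum.elim 0 (Sum.elim y z) =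
      Sum.elim y (fromBlocks (-Ks) 0 0 Kd *ᵥ Sum.elim y z) := by
  simp [annulusK_mulVec, fromBlocks_mulVec, Matrix.neg_mulVec]

theorem annulusNullVectors_isotropic (hKs : Ks.IsSymm) {Λa : c → a → ℤ}
    {Λb : d → a ⊕ b → ℤ} (hnulla : ∀ i j, Λa i ⬝ᵥ (Ks *ᵥ Λa j) = 0)
    (hnullb : ∀ i j, Λb i ⬝ᵥ (fromBlocks (-Ks) 0 0 Kd *ᵥ Λb j) = 0) :
    ∀ i j, annulusNullVectors Ks Λa Λb i ⬝ᵥ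
      (annulusK Ks Kd *ᵥ annulusNullVectors Ks Λa Λb j) = 0 := by
  have hKs_dot (x y : a → ℤ) : Ks *ᵥ x ⬝ᵥ y = x ⬝ᵥ Ks *ᵥ y := by
    rw [← vecMul_transpose, ← dotProduct_mulVec, hKs.eq]
  have hsplit (j : d) : Λb j = Sum.elim (Λb j ∘ Sum.inl) (Λb j ∘ Sum.inr) :=
    (Sum.elim_comp_inl_inr _).symm
  rintro (i | i) (j | j) <;> simp only [annulusNullVectors, Sum.elim_inl, Sum.elim_inr]
  · rw [annulusK_mulVec_outer]
    simp [hKs_dot, hnulla]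
  · rw [hsplit j, annulusK_mulVec_inner]
    simp [hKs_dot, fromBlocks_mulVec, Matrix.neg_mulVec]
  · rw [annulusK_mulVec_outer]
    simp
  · rw [hsplit j, annulusK_mulVec_inner, ← hsplit j]
    simp [hnullb]

theorem det_annulusK_ne_zero [DecidableEq b] (hKd : Kd.det ≠ 0) : (annulusK Ks Kd).det ≠ 0 := by
  intro h0
  obtain ⟨v, hv0, hv⟩ := Matrix.exists_mulVec_eq_zero_iff.mpr h0
  obtain ⟨x, y, z, rfl⟩ : ∃ x y z, v = Sum.elim x (Sum.elim y z) :=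
    ⟨v ∘ Sum.inl, v ∘ Sum.inr ∘ Sum.inl, v ∘ Sum.inr ∘ Sum.inr, by ext (r | r | r) <;> rfl⟩
  simp only [annulusK_mulVec, ← Sum.elim_zero_zero, Sum.elim_eq_iff] at hv hv0
  obtain ⟨rfl, hx, hz⟩ := hv
  have hz0 : z = 0 := by
    by_contra hz0
    exact hKd (Matrix.exists_mulVec_eq_zero_iff.mp ⟨z, hz0, hz⟩)
  simp_all

end Annulus

theorem annulus_ground_state_degeneracy_general (N M : ℕ)
    (Ks : Matrix (Fin (2 * N)) (Fin (2 * N)) ℤ) (hKs : Ks.IsSymm) (hdets : Ks.det ≠ 0)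
    (Kd : Matrix (Fin (2 * M)) (Fin (2 * M)) ℤ) (hKd : Kd.IsSymm) (hdetd : Kd.det ≠ 0)
    (Λa : Fin N → Fin (2 * N) → ℤ)
    (Λb : Fin (N + M) → Fin (2 * N) ⊕ Fin (2 * M) → ℤ)
    (hinda : LinearIndependent ℚ (fun i => fun j => (Λa i j : ℚ)))
    (hindb : LinearIndependent ℚ (fun i => fun j => (Λb i j : ℚ)))
    (hnulla : ∀ i j, Λa i ⬝ᵥ (Ks *ᵥ Λa j) = 0)
    (hnullb : ∀ i j, Λb i ⬝ᵥ ((Matrix.fromBlocks (-Ks) 0 0 Kd) *ᵥ Λb j) = 0) :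
    let K' : Matrix (Fin (2 * N) ⊕ (Fin (2 * N) ⊕ Fin (2 * M)))
        (Fin (2 * N) ⊕ (Fin (2 * N) ⊕ Fin (2 * M))) ℤ :=
      Matrix.fromBlocks 0 (Matrix.fromCols 1 0) (Matrix.fromRows 1 0)
        (Matrix.fromBlocks (-Ks) 0 0 Kd)
    let Λ' : Fin N ⊕ Fin (N + M) → Fin (2 * N) ⊕ (Fin (2 * N) ⊕ Fin (2 * M)) → ℤ :=
      Sum.elim (fun i => Sum.elim (Ks *ᵥ Λa i) (Sum.elim (Λa i) 0))
        (fun j => Sum.elim 0 (Λb j))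
    K'.IsSymm ∧ K'.det ≠ 0 ∧
    LinearIndependent ℚ (fun i => fun j => (Λ' i j : ℚ)) ∧
    (∀ i j, Λ' i ⬝ᵥ (K' *ᵥ Λ' j) = 0) ∧
    AddSubgroup.closure (Set.range Λ') ≤ sectorLattice K' Λ' ∧
    (AddSubgroup.closure (Set.range Λ')).relIndex (sectorLattice K' Λ') ≠ 0 ∧
    (AddSubgroup.closure (Set.range Λ')).relIndex (sectorLattice K' Λ') =
      minorGcd (Matrix.of fun r c => Λ' c r) := by
  intro K' Λ'
  have hdet : K'.det ≠ 0 := det_annulusK_ne_zero hdetd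
  have hind : LinearIndependent ℚ fun i j => (Λ' i j : ℚ) :=
    linearIndependent_int_iff_rat.mp <| linearIndependent_annulusNullVectors hdets
      (linearIndependent_int_iff_rat.mpr hinda) (linearIndependent_int_iff_rat.mpr hindb)
  have hnull : ∀ i j, Λ' i ⬝ᵥ (K' *ᵥ Λ' j) = 0 := annulusNullVectors_isotropic hKs hnulla hnullb
  have hcard : Fintype.card (Fin (2 * N) ⊕ (Fin (2 * N) ⊕ Fin (2 * M))) ≤
      2 * Fintype.card (Fin N ⊕ Fin (N + M)) := by
    simp only [Fintype.card_sum, Fintype.card_fin]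
    omega
  exact ⟨isSymm_annulusK hKs hKd, hdet, hind, hnull,
    (AddSubgroup.closure_le _).mpr (Set.range_subset_iff.mpr fun j i => hnull i j),
    relIndex_sectorLattice_eq_minorGcd hdet hind hnull hcard⟩

/-- (Ground state degeneracy for the disk-in-annulus geometry of
Fig. 1c/6c.)  A disk with K-matrix `K_d` is surrounded by an annular strip with K-matrix
`K_s`; the outer boundary is gapped by null vectors `Λ_{a,i}` (w.r.t. `K_s`) and the inner
boundary, whose modes have K-matrix `K_b = diag(-K_s, K_d)`, by null vectors `Λ_{b,i}`.
With `K' = [[0, I, 0], [I, -K_s, 0], [0, 0, K_d]]`, `Λ'ᵢ = (K_s Λ_{a,i}, Λ_{a,i}, 0)` for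
`i ≤ N` and `Λ'_{N+j} = (0, Λ_{b,j})`, the matrix `K'` is symmetric with nonzero
determinant, the `Λ'ᵢ` are linearly independent over `ℚ` and satisfy the null vector
condition for `K'`, and the index in `Γ' = {p : Λ'ᵢᵀ K' p = 0 ∀ i}` of the subgroup `A'`
generated by the `Λ'ᵢ` is finite and equals the gcd of the absolute values of the
`(2N+M) × (2N+M)` minors of the matrix `M'` with columns the `Λ'ᵢ`. -/
theorem annulus_ground_state_degeneracy (N M : ℕ) (hN : 1 ≤ N) (hM : 1 ≤ M)
    (Ks : Matrix (Fin (2 * N)) (Fin (2 * N)) ℤ) (hKs : Ks.IsSymm) (hdets : Ks.det ≠ 0)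
    (Kd : Matrix (Fin (2 * M)) (Fin (2 * M)) ℤ) (hKd : Kd.IsSymm) (hdetd : Kd.det ≠ 0)
    (Λa : Fin N → Fin (2 * N) → ℤ)
    (Λb : Fin (N + M) → Fin (2 * N) ⊕ Fin (2 * M) → ℤ)
    (hinda : LinearIndependent ℚ (fun i => fun j => (Λa i j : ℚ)))
    (hindb : LinearIndependent ℚ (fun i => fun j => (Λb i j : ℚ)))
    (hnulla : ∀ i j, Λa i ⬝ᵥ (Ks *ᵥ Λa j) = 0)
    (hnullb : ∀ i j, Λb i ⬝ᵥ ((Matrix.fromBlocks (-Ks) 0 0 Kd) *ᵥ Λb j) = 0) :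
    let K' : Matrix (Fin (2 * N) ⊕ (Fin (2 * N) ⊕ Fin (2 * M)))
        (Fin (2 * N) ⊕ (Fin (2 * N) ⊕ Fin (2 * M))) ℤ :=
      Matrix.fromBlocks 0 (Matrix.fromCols 1 0) (Matrix.fromRows 1 0)
        (Matrix.fromBlocks (-Ks) 0 0 Kd)
    let Λ' : Fin N ⊕ Fin (N + M) → Fin (2 * N) ⊕ (Fin (2 * N) ⊕ Fin (2 * M)) → ℤ :=
      Sum.elim (fun i => Sum.elim (Ks *ᵥ Λa i) (Sum.elim (Λa i) 0))
        (fun j => Sum.elim 0 (Λb j))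
    K'.IsSymm ∧ K'.det ≠ 0 ∧
    LinearIndependent ℚ (fun i => fun j => (Λ' i j : ℚ)) ∧
    (∀ i j, Λ' i ⬝ᵥ (K' *ᵥ Λ' j) = 0) ∧
    AddSubgroup.closure (Set.range Λ') ≤ sectorLattice K' Λ' ∧
    (AddSubgroup.closure (Set.range Λ')).relIndex (sectorLattice K' Λ') ≠ 0 ∧
    (AddSubgroup.closure (Set.range Λ')).relIndex (sectorLattice K' Λ') =
      minorGcd (Matrix.of fun r c => Λ' c r) :=
  annulus_ground_state_degeneracy_general N M Ks hKs hdets Kd hKd hdetd Λa Λb hinda hindb hnulla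
    hnullb
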